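/- arXiv:2001.00678 — 3 statements merged into one kernel-verified Lean document; each statement's English description precedes it below -/
import Mathlib

section
/- (Sufficiency part of the spectral decomposition theorem.) Suppose there exist a symmetric matrix Γ = [[Γ₁₁, 0],[0, 0]] ∈ ℝ^{n×n} with Γ₁₁ ∈ ℝ^{n_u×n_u} invertible, and a symmetric invertible matrix Φ ∈ ℝ^{n_φ×n_φ}, such that Γ + X_φᵀΦX_φ is invertible and, with T := (Γ + X_φᵀΦX_φ)⁻¹: J₁ᵀΓ₁₁ = Γ₁₁J₁, X_u T X_φᵀ = 0, and X_φ T X_φᵀ = Φ⁻¹. Then X_u T X_uᵀ is symmetric and invertible, and for any symmetric invertible matrix K'₂₂ ∈ ℝ^{n_φ×n_φ}, the matrices M_u := (X_u T X_uᵀ)⁻¹ and K := X^{-T}·[[−Γ₁₁J₁⁻¹, 0],[0, K'₂₂]]·X⁻¹ are symmetric and invertible and satisfy MX + KXJ = 0 with M = [[M_u, 0],[0, 0]]; moreover Γ = X_uᵀ M_u X_u. -/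
/-!
Since `T = (Γ + X_φᵀ Φ X_φ)⁻¹` is symmetric, the hypotheses say exactly that the congruence
`X T Xᵀ` is block diagonal, `diag (X_u T X_uᵀ, Φ⁻¹)`; as `X` and `T` are invertible, so is
`X_u T X_uᵀ`. Inverting the congruence gives
`Γ + X_φᵀ Φ X_φ = T⁻¹ = Xᵀ diag (M_u, Φ) X = X_uᵀ M_u X_u + X_φᵀ Φ X_φ`, hence `Γ = X_uᵀ M_u X_u`.
Then `Xᵀ (M X + K X J) = Xᵀ M X + diag (-Γ₁₁ J₁⁻¹, K'₂₂) J = Γ - Γ = 0`, and `K` is symmetric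
because `J₁ᵀ Γ₁₁ = Γ₁₁ J₁` makes `Γ₁₁ J₁⁻¹` symmetric.
-/

open Matrix

namespace Matrix

variable {R : Type*} [CommRing R] {l m n : Type*}

theorem IsSymm.transpose_mul_mul [Fintype m] {B : Matrix m m R} (hB : B.IsSymm)
    (P : Matrix m l R) : (Pᵀ * B * P).IsSymm := by
  simp only [IsSymm, transpose_mul, transpose_transpose, hB.eq, Matrix.mul_assoc]

theorem IsSymm.mul_mul_transpose [Fintype m] {B : Matrix m m R} (hB : B.IsSymm)
    (P : Matrix l m R) : (P * B * Pᵀ).IsSymm := by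
  simpa using hB.transpose_mul_mul Pᵀ

theorem IsSymm.mul_inv_of_transpose_mul_eq_mul [Fintype m] [DecidableEq m] {A J : Matrix m m R}
    (hA : A.IsSymm) (hJ : IsUnit J) (hcomm : Jᵀ * A = A * J) : (A * J⁻¹).IsSymm := by
  have hJdet := (isUnit_iff_isUnit_det J).mp hJ
  have hJtdet : IsUnit Jᵀ.det := by rwa [det_transpose]
  calc (A * J⁻¹)ᵀ = Jᵀ⁻¹ * A := by rw [transpose_mul, transpose_nonsing_inv, hA.eq]
    _ = Jᵀ⁻¹ * (Jᵀ * A) * J⁻¹ := by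
      rw [hcomm, ← Matrix.mul_assoc, mul_nonsing_inv_cancel_right _ _ hJdet]
    _ = A * J⁻¹ := by rw [nonsing_inv_mul_cancel_left _ _ hJtdet]

theorem isUnit_transpose_mul_mul [Fintype m] [DecidableEq m] {P B : Matrix m m R}
    (hP : IsUnit P) (hB : IsUnit B) : IsUnit (Pᵀ * B * P) :=
  (((isUnit_transpose P).mpr hP).mul hB).mul hP

theorem fromRows_mul_mul_transpose_fromRows_of_isSymm [Fintype l] {T : Matrix l l R}
    (hT : T.IsSymm) (A₁ : Matrix m l R) (A₂ : Matrix n l R) :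
    fromRows A₁ A₂ * T * (fromRows A₁ A₂)ᵀ =
      fromBlocks (A₁ * T * A₁ᵀ) (A₁ * T * A₂ᵀ) (A₁ * T * A₂ᵀ)ᵀ (A₂ * T * A₂ᵀ) := by
  rw [transpose_fromRows, fromRows_mul, fromRows_mul_fromCols]
  simp only [transpose_mul, transpose_transpose, hT.eq, Matrix.mul_assoc]

theorem transpose_fromRows_mul_fromBlocks_mul_fromRows [Fintype m] [Fintype n]
    (A₁ : Matrix m l R) (A₂ : Matrix n l R) (P : Matrix m m R) (Q : Matrix n n R) :
    (fromRows A₁ A₂)ᵀ * fromBlocks P 0 0 Q * fromRows A₁ A₂ = A₁ᵀ * P * A₁ + A₂ᵀ * Q * A₂ := by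
  rw [transpose_fromRows, fromCols_mul_fromBlocks, fromCols_mul_fromRows]
  simp [Matrix.mul_assoc]

theorem transpose_mul_inv_mul_mul_transpose_mul [Fintype m] [DecidableEq m] {X : Matrix m m R}
    (hX : IsUnit X) (T : Matrix m m R) : Xᵀ * (X * T * Xᵀ)⁻¹ * X = T⁻¹ := by
  have hXdet := (isUnit_iff_isUnit_det X).mp hX
  have hXtdet : IsUnit Xᵀ.det := by rwa [det_transpose]
  rw [mul_inv_rev, mul_inv_rev, mul_nonsing_inv_cancel_left _ _ hXtdet,
    nonsing_inv_mul_cancel_right _ _ hXdet]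

theorem inv_eq_of_fromRows_mul_mul_transpose_eq_fromBlocks [Fintype m] [Fintype n]
    [DecidableEq m] [DecidableEq n] {X₁ : Matrix m (m ⊕ n) R} {X₂ : Matrix n (m ⊕ n) R}
    (hX : IsUnit (fromRows X₁ X₂)) {T : Matrix (m ⊕ n) (m ⊕ n) R} {A : Matrix m m R}
    {D : Matrix n n R} (hA : IsUnit A) (hD : IsUnit D)
    (h : fromRows X₁ X₂ * T * (fromRows X₁ X₂)ᵀ = fromBlocks A 0 0 D) :
    T⁻¹ = X₁ᵀ * A⁻¹ * X₁ + X₂ᵀ * D⁻¹ * X₂ := by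
  rw [← transpose_mul_inv_mul_mul_transpose_mul hX T, h,
    inv_fromBlocks_zero₂₁_of_isUnit_iff _ _ _ (iff_of_true hA hD), Matrix.mul_zero,
    Matrix.zero_mul, neg_zero, transpose_fromRows_mul_fromBlocks_mul_fromRows]

theorem mul_add_transpose_inv_mul_mul_inv_mul_mul_eq_zero [Fintype m] [DecidableEq m]
    {X : Matrix m m R} (hX : IsUnit X) {M B J : Matrix m m R} (h : Xᵀ * M * X + B * J = 0) :
    M * X + X⁻¹ᵀ * B * X⁻¹ * X * J = 0 := by
  have hXdet := (isUnit_iff_isUnit_det X).mp hX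
  have hXtdet : IsUnit Xᵀ.det := by rwa [det_transpose]
  calc M * X + X⁻¹ᵀ * B * X⁻¹ * X * J = Xᵀ⁻¹ * (Xᵀ * M * X + B * J) := by
        rw [nonsing_inv_mul_cancel_right _ _ hXdet, transpose_nonsing_inv, Matrix.mul_add,
          Matrix.mul_assoc Xᵀ, nonsing_inv_mul_cancel_left _ _ hXtdet, Matrix.mul_assoc]
    _ = 0 := by rw [h, Matrix.mul_zero]

end Matrix

theorem spectral_decomposition_sufficiency_general (nu nφ : ℕ)
    (Xu : Matrix (Fin nu) (Fin nu ⊕ Fin nφ) ℝ)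
    (Xφ : Matrix (Fin nφ) (Fin nu ⊕ Fin nφ) ℝ)
    (X : Matrix (Fin nu ⊕ Fin nφ) (Fin nu ⊕ Fin nφ) ℝ)
    (hX : X = fromRows Xu Xφ) (hXUnit : IsUnit X)
    (J₁ : Matrix (Fin nu) (Fin nu) ℝ)
    (hJ₁Unit : IsUnit J₁)
    (J : Matrix (Fin nu ⊕ Fin nφ) (Fin nu ⊕ Fin nφ) ℝ)
    (hJ : J = fromBlocks J₁ 0 0 0)
    (Γ₁₁ : Matrix (Fin nu) (Fin nu) ℝ)
    (hΓ₁₁Symm : Γ₁₁ᵀ = Γ₁₁) (hΓ₁₁Unit : IsUnit Γ₁₁)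
    (Φ : Matrix (Fin nφ) (Fin nφ) ℝ) (hΦSymm : Φᵀ = Φ) (hΦUnit : IsUnit Φ)
    (T : Matrix (Fin nu ⊕ Fin nφ) (Fin nu ⊕ Fin nφ) ℝ)
    (hTUnit : IsUnit (fromBlocks Γ₁₁ 0 0 (0 : Matrix (Fin nφ) (Fin nφ) ℝ)
        + Xφᵀ * Φ * Xφ))
    (hT : T = (fromBlocks Γ₁₁ 0 0 (0 : Matrix (Fin nφ) (Fin nφ) ℝ)
        + Xφᵀ * Φ * Xφ)⁻¹)
    (hcomm : J₁ᵀ * Γ₁₁ = Γ₁₁ * J₁)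
    (horth : Xu * T * Xφᵀ = 0)
    (hΦinv : Xφ * T * Xφᵀ = Φ⁻¹) :
    (Xu * T * Xuᵀ)ᵀ = Xu * T * Xuᵀ ∧ IsUnit (Xu * T * Xuᵀ) ∧
    ∀ K₂₂' : Matrix (Fin nφ) (Fin nφ) ℝ, K₂₂'ᵀ = K₂₂' → IsUnit K₂₂' →
      (let Mu := (Xu * T * Xuᵀ)⁻¹;
       let K := (X⁻¹)ᵀ * fromBlocks (-(Γ₁₁ * J₁⁻¹)) 0 0 K₂₂' * X⁻¹;
       let M := fromBlocks Mu 0 0 (0 : Matrix (Fin nφ) (Fin nφ) ℝ);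
       Muᵀ = Mu ∧ IsUnit Mu ∧ Kᵀ = K ∧ IsUnit K ∧
       M * X + K * X * J = 0 ∧
       fromBlocks Γ₁₁ 0 0 (0 : Matrix (Fin nφ) (Fin nφ) ℝ) = Xuᵀ * Mu * Xu) := by
  subst hX hJ
  set S := fromBlocks Γ₁₁ 0 0 (0 : Matrix (Fin nφ) (Fin nφ) ℝ) + Xφᵀ * Φ * Xφ
  have hTSymm : T.IsSymm :=
    hT ▸ ((IsSymm.fromBlocks hΓ₁₁Symm (by simp) isSymm_zero).add
      (IsSymm.transpose_mul_mul hΦSymm Xφ)).inv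
  have hXTX : fromRows Xu Xφ * T * (fromRows Xu Xφ)ᵀ = fromBlocks (Xu * T * Xuᵀ) 0 0 Φ⁻¹ := by
    rw [fromRows_mul_mul_transpose_fromRows_of_isSymm hTSymm, horth, hΦinv, transpose_zero]
  obtain ⟨hAUnit, hΦinvUnit⟩ := isUnit_fromBlocks_zero₂₁.mp <| hXTX ▸
    isUnit_transpose_mul_mul ((isUnit_transpose _).mpr hXUnit)
      (hT ▸ isUnit_nonsing_inv_iff.mpr hTUnit)
  have hΓ : fromBlocks Γ₁₁ 0 0 0 = Xuᵀ * (Xu * T * Xuᵀ)⁻¹ * Xu := by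
    have hTinv : T⁻¹ = S := by
      rw [hT, nonsing_inv_nonsing_inv _ ((isUnit_iff_isUnit_det S).mp hTUnit)]
    rw [inv_eq_of_fromRows_mul_mul_transpose_eq_fromBlocks hXUnit hAUnit hΦinvUnit hXTX,
      nonsing_inv_nonsing_inv _ ((isUnit_iff_isUnit_det Φ).mp hΦUnit)] at hTinv
    exact (add_right_cancel hTinv).symm
  refine ⟨hTSymm.mul_mul_transpose Xu, hAUnit, fun K₂₂' hK₂₂'Symm hK₂₂'Unit => ?_⟩
  refine ⟨(hTSymm.mul_mul_transpose Xu).inv, isUnit_nonsing_inv_iff.mpr hAUnit, ?_, ?_, ?_, hΓ⟩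
  · exact ((IsSymm.mul_inv_of_transpose_mul_eq_mul hΓ₁₁Symm hJ₁Unit hcomm).neg.fromBlocks
      (by simp) hK₂₂'Symm).transpose_mul_mul _
  · exact isUnit_transpose_mul_mul (isUnit_nonsing_inv_iff.mpr hXUnit) (isUnit_fromBlocks_zero₂₁.mpr
      ⟨(hΓ₁₁Unit.mul (isUnit_nonsing_inv_iff.mpr hJ₁Unit)).neg, hK₂₂'Unit⟩)
  · refine mul_add_transpose_inv_mul_mul_inv_mul_mul_eq_zero hXUnit ?_
    rw [transpose_fromRows_mul_fromBlocks_mul_fromRows, ← hΓ, fromBlocks_multiply]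
    simp [nonsing_inv_mul_cancel_right _ _ ((isUnit_iff_isUnit_det J₁).mp hJ₁Unit), fromBlocks_add]

/-- sufficiency part of the spectral decomposition theorem:
Let `X = [Xu; Xφ]` be invertible, `J₁` invertible diagonal, `J = diag(J₁, 0)`.
Suppose `Γ = diag(Γ₁₁, 0)` with `Γ₁₁` symmetric invertible, `Φ` symmetric
invertible, `Γ + Xφᵀ Φ Xφ` invertible, and with `T := (Γ + Xφᵀ Φ Xφ)⁻¹` one has
`J₁ᵀ Γ₁₁ = Γ₁₁ J₁`, `Xu T Xφᵀ = 0` and `Xφ T Xφᵀ = Φ⁻¹`. Then `Xu T Xuᵀ` is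
symmetric and invertible, and for any symmetric invertible `K₂₂'`, the matrices
`Mu := (Xu T Xuᵀ)⁻¹` and `K := X⁻ᵀ [[−Γ₁₁ J₁⁻¹, 0],[0, K₂₂']] X⁻¹` are
symmetric invertible, satisfy `M X + K X J = 0` with `M = diag(Mu, 0)`, and
`diag(Γ₁₁, 0) = Xuᵀ Mu Xu`. -/
theorem spectral_decomposition_sufficiency (nu nφ : ℕ)
    (Xu : Matrix (Fin nu) (Fin nu ⊕ Fin nφ) ℝ)
    (Xφ : Matrix (Fin nφ) (Fin nu ⊕ Fin nφ) ℝ)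
    (X : Matrix (Fin nu ⊕ Fin nφ) (Fin nu ⊕ Fin nφ) ℝ)
    (hX : X = fromRows Xu Xφ) (hXUnit : IsUnit X)
    (J₁ : Matrix (Fin nu) (Fin nu) ℝ)
    (hJ₁diag : ∀ i j, i ≠ j → J₁ i j = 0) (hJ₁Unit : IsUnit J₁)
    (J : Matrix (Fin nu ⊕ Fin nφ) (Fin nu ⊕ Fin nφ) ℝ)
    (hJ : J = fromBlocks J₁ 0 0 0)
    (Γ₁₁ : Matrix (Fin nu) (Fin nu) ℝ)
    (hΓ₁₁Symm : Γ₁₁ᵀ = Γ₁₁) (hΓ₁₁Unit : IsUnit Γ₁₁)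
    (Φ : Matrix (Fin nφ) (Fin nφ) ℝ) (hΦSymm : Φᵀ = Φ) (hΦUnit : IsUnit Φ)
    (T : Matrix (Fin nu ⊕ Fin nφ) (Fin nu ⊕ Fin nφ) ℝ)
    (hTUnit : IsUnit (fromBlocks Γ₁₁ 0 0 (0 : Matrix (Fin nφ) (Fin nφ) ℝ)
        + Xφᵀ * Φ * Xφ))
    (hT : T = (fromBlocks Γ₁₁ 0 0 (0 : Matrix (Fin nφ) (Fin nφ) ℝ)
        + Xφᵀ * Φ * Xφ)⁻¹)
    (hcomm : J₁ᵀ * Γ₁₁ = Γ₁₁ * J₁)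
    (horth : Xu * T * Xφᵀ = 0)
    (hΦinv : Xφ * T * Xφᵀ = Φ⁻¹) :
    (Xu * T * Xuᵀ)ᵀ = Xu * T * Xuᵀ ∧ IsUnit (Xu * T * Xuᵀ) ∧
    ∀ K₂₂' : Matrix (Fin nφ) (Fin nφ) ℝ, K₂₂'ᵀ = K₂₂' → IsUnit K₂₂' →
      (let Mu := (Xu * T * Xuᵀ)⁻¹;
       let K := (X⁻¹)ᵀ * fromBlocks (-(Γ₁₁ * J₁⁻¹)) 0 0 K₂₂' * X⁻¹;
       let M := fromBlocks Mu 0 0 (0 : Matrix (Fin nφ) (Fin nφ) ℝ);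
       Muᵀ = Mu ∧ IsUnit Mu ∧ Kᵀ = K ∧ IsUnit K ∧
       M * X + K * X * J = 0 ∧
       fromBlocks Γ₁₁ 0 0 (0 : Matrix (Fin nφ) (Fin nφ) ℝ) = Xuᵀ * Mu * Xu) :=
  spectral_decomposition_sufficiency_general nu nφ Xu Xφ X hX hXUnit J₁ hJ₁Unit J hJ Γ₁₁ hΓ₁₁Symm
    hΓ₁₁Unit Φ hΦSymm hΦUnit T hTUnit hT hcomm horth hΦinv
end

section
/- (No-spillover part of the main eigenvalue embedding theorem.) Under the stated hypotheses, the matrices M̃_u := (M_u⁻¹ − X_{1u}Γ₁⁻¹X_{1u}ᵀ + X_{1u}ΘΓ̃₁⁻¹ΘᵀX_{1u}ᵀ)⁻¹ and K̃ := (K⁻¹ + X₁Λ₁Γ₁⁻¹X₁ᵀ − X₁ΘΛ̃₁Γ̃₁⁻¹ΘᵀX₁ᵀ)⁻¹, with M̃ := [[M̃_u, 0],[0, 0]] ∈ ℝ^{n×n}, satisfy M̃·X₂ + K̃·X₂·diag(Λ₃⁻¹, 0_{n_φ}) = 0; that is, the remaining n − p eigenvalues (including the infinite ones) and their eigenvectors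 X₂ of the original pencil λM + K are preserved unchanged by the updated pencil λM̃ + K̃. -/
/-!
Symmetry of the pencil makes `W := X₁ᵀ K X₂` satisfy the Sylvester equation
`Λ₁⁻ᵀ W = W diag(Λ₃⁻¹, 0)`. Its second block column is killed by the invertible `Λ₁⁻ᵀ`; its
first satisfies `Λ₁ᵀ W₁ = W₁ Λ₃`, and since `Λ₁` and `Λ₃` have no common eigenvalue,
`χ_{Λ₃}(Λ₁ᵀ)` is invertible and annihilates `W₁`. Hence `X₁ᵀ K X₂ = 0` and then
`X₁ᵀ M X₂ = 0`. Both updates only add terms of the form `X₁ S X₁ᵀ` to `M_u⁻¹` and `K⁻¹`, which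
vanish on `M_u X₂` and `K X₂`, so `M̃ X₂ = M X₂` and `K̃ X₂ = K X₂`.
-/

open Matrix Polynomial

namespace Matrix

variable {m n o : Type*}

section CommRing

variable {R : Type*} [CommRing R]

theorem fromCols_add_fromCols {α : Type*} [Add α] (A₁ B₁ : Matrix n m α) (A₂ B₂ : Matrix n o α) :
    fromCols A₁ A₂ + fromCols B₁ B₂ = fromCols (A₁ + B₁) (A₂ + B₂) := by
  ext i (j | j) <;> rfl

theorem fromBlocks_zero_mul [Fintype m] [Fintype n] (A : Matrix m m R)
    (X : Matrix (m ⊕ n) o R) :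
    fromBlocks A 0 0 (0 : Matrix n n R) * X = fromRows (A * X.toRows₁) 0 := by
  conv_lhs => rw [← fromRows_toRows X]
  rw [fromBlocks_mul_fromRows]
  simp

theorem mul_fromCols_add_mul_fromCols_mul_fromBlocks_eq_zero_iff [Fintype n] [Fintype m]
    [Fintype o] {M K : Matrix n n R} {X₁ : Matrix n m R} {X₂ : Matrix n o R}
    {A : Matrix m m R} {B : Matrix o o R} :
    M * fromCols X₁ X₂ + K * fromCols X₁ X₂ * fromBlocks A 0 0 B = 0 ↔
      M * X₁ + K * X₁ * A = 0 ∧ M * X₂ + K * X₂ * B = 0 := by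
  rw [mul_fromCols, mul_fromCols, fromCols_mul_fromBlocks, fromCols_add_fromCols,
    ← fromCols_zero, fromCols_ext_iff]
  simp only [Matrix.mul_zero, add_zero, zero_add]

theorem eq_zero_of_isUnit_of_mul_eq_zero [Fintype m] [DecidableEq m] {A : Matrix m m R}
    (hA : IsUnit A) {W : Matrix m n R} (h : A * W = 0) : W = 0 := by
  rw [← nonsing_inv_mul_cancel_left A W ((isUnit_iff_isUnit_det A).mp hA), h, Matrix.mul_zero]

theorem aeval_mul_eq_mul_aeval_of_mul_eq_mul [Fintype m] [DecidableEq m] [Fintype n]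
    [DecidableEq n] {A : Matrix m m R} {B : Matrix n n R} {W : Matrix m n R}
    (hW : A * W = W * B) (q : R[X]) : aeval A q * W = W * aeval B q := by
  induction q using Polynomial.induction_on with
  | C a => simp [Algebra.algebraMap_eq_smul_one]
  | add p q hp hq => rw [map_add, map_add, Matrix.add_mul, Matrix.mul_add, hp, hq]
  | monomial k a ih =>
    rw [pow_succ, ← mul_assoc, map_mul (aeval A), map_mul (aeval B), aeval_X, aeval_X,
      Matrix.mul_assoc, hW, ← Matrix.mul_assoc, ih, Matrix.mul_assoc]

theorem transpose_mul_mul_eq_mul_of_isSymm [Fintype n] [Fintype m] [Fintype o]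
    {M K : Matrix n n R} (hM : M.IsSymm) (hK : K.IsSymm) {X₁ : Matrix n m R}
    {X₂ : Matrix n o R} {A : Matrix m m R} {B : Matrix o o R}
    (h₁ : M * X₁ + K * X₁ * A = 0) (h₂ : M * X₂ + K * X₂ * B = 0) :
    Aᵀ * (X₁ᵀ * K * X₂) = X₁ᵀ * K * X₂ * B := by
  have e₁ : X₁ᵀ * M * X₂ + Aᵀ * (X₁ᵀ * K * X₂) = 0 := by
    simpa [transpose_add, transpose_mul, hM.eq, hK.eq, Matrix.add_mul, Matrix.mul_assoc]
      using congrArg (fun Z => Zᵀ * X₂) h₁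
  have e₂ : X₁ᵀ * M * X₂ + X₁ᵀ * K * X₂ * B = 0 := by
    simpa [Matrix.mul_add, Matrix.mul_assoc] using congrArg (X₁ᵀ * ·) h₂
  exact add_left_cancel (e₁.trans e₂.symm)

theorem inv_add_mul_mul_transpose_inv_mul_of_transpose_mul_eq_zero [Fintype n] [DecidableEq n]
    [Fintype m] {A : Matrix n n R} {U : Matrix n m R} {S : Matrix m m R} {Y : Matrix n o R}
    (hA : IsUnit A) (hF : IsUnit (A⁻¹ + U * S * Uᵀ)) (hUY : Uᵀ * (A * Y) = 0) :
    (A⁻¹ + U * S * Uᵀ)⁻¹ * Y = A * Y := by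
  have hFY : (A⁻¹ + U * S * Uᵀ) * (A * Y) = Y := by
    rw [Matrix.add_mul, Matrix.mul_assoc, Matrix.mul_assoc, hUY, Matrix.mul_zero,
      Matrix.mul_zero, add_zero, nonsing_inv_mul_cancel_left _ _ ((isUnit_iff_isUnit_det A).mp hA)]
  conv_lhs => rw [← hFY]
  exact nonsing_inv_mul_cancel_left _ _ ((isUnit_iff_isUnit_det _).mp hF)

end CommRing

section Field

variable {K L : Type*} [Field K] [Field L] [Fintype m] [DecidableEq m] [Fintype n] [DecidableEq n]

theorem mem_spectrum_iff_det_sub_smul_one_eq_zero {A : Matrix n n K} {μ : K} :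
    μ ∈ spectrum K A ↔ (A - μ • 1).det = 0 := by
  rw [spectrum.mem_iff, Algebra.algebraMap_eq_smul_one, ← neg_sub, IsUnit.neg_iff,
    isUnit_iff_isUnit_det, isUnit_iff_ne_zero, not_not]

theorem spectrum_transpose (A : Matrix n n K) : spectrum K Aᵀ = spectrum K A := by
  ext μ
  simp only [mem_spectrum_iff_isRoot_charpoly, charpoly_transpose]

theorem eq_zero_of_mul_eq_mul_of_disjoint_spectrum [IsAlgClosed K] {A : Matrix m m K}
    {B : Matrix n n K} {W : Matrix m n K} (hAB : Disjoint (spectrum K A) (spectrum K B))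
    (hW : A * W = W * B) : W = 0 := by
  cases isEmpty_or_nonempty n
  · exact Subsingleton.elim _ _
  -- spectral mapping: the spectrum of `χ_B(A)` is `χ_B '' σ(A)`, which avoids `0`
  have hunit : IsUnit (aeval A B.charpoly) := by
    rw [← not_not (a := IsUnit _), ← spectrum.zero_mem_iff K,
      spectrum.map_polynomial_aeval_of_degree_pos _ _
        (by rw [charpoly_degree_eq_dim]; exact_mod_cast Fintype.card_pos)]
    rintro ⟨μ, hμA, hμB⟩
    exact Set.disjoint_left.mp hAB hμA (mem_spectrum_iff_isRoot_charpoly.mpr hμB)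
  refine eq_zero_of_isUnit_of_mul_eq_zero hunit ?_
  rw [aeval_mul_eq_mul_aeval_of_mul_eq_mul hW, aeval_self_charpoly, Matrix.mul_zero]

theorem eq_zero_of_mul_eq_mul_of_disjoint_spectrum_map [IsAlgClosed L] (f : K →+* L)
    {A : Matrix m m K} {B : Matrix n n K} {W : Matrix m n K}
    (hAB : Disjoint (spectrum L (A.map f)) (spectrum L (B.map f))) (hW : A * W = W * B) :
    W = 0 := by
  refine map_injective f.injective ((eq_zero_of_mul_eq_mul_of_disjoint_spectrum hAB ?_).trans
    (Matrix.map_zero _ (map_zero f)).symm)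
  simp only [← Matrix.map_mul, hW]

theorem eq_zero_of_inv_transpose_mul_eq_mul_fromBlocks_inv_zero [Fintype o] [IsAlgClosed L]
    (f : K →+* L) {Λ₁ : Matrix m m K} {Λ₃ : Matrix n n K} (hΛ₁ : IsUnit Λ₁) (hΛ₃ : IsUnit Λ₃)
    (hdisj : Disjoint (spectrum L (Λ₁.map f)) (spectrum L (Λ₃.map f)))
    {W : Matrix m (n ⊕ o) K} (hW : (Λ₁⁻¹)ᵀ * W = W * fromBlocks Λ₃⁻¹ 0 0 (0 : Matrix o o K)) :
    W = 0 := by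
  rw [← fromCols_toCols W, fromCols_mul_fromBlocks, mul_fromCols, fromCols_ext_iff] at hW
  simp only [Matrix.mul_zero, add_zero] at hW
  obtain ⟨hW₁, hW₂⟩ := hW
  have hsyl : Λ₁ᵀ * W.toCols₁ = W.toCols₁ * Λ₃ := by
    calc Λ₁ᵀ * W.toCols₁ = Λ₁ᵀ * (W.toCols₁ * Λ₃⁻¹) * Λ₃ := by
          rw [Matrix.mul_assoc, Matrix.mul_assoc,
            nonsing_inv_mul _ ((isUnit_iff_isUnit_det Λ₃).mp hΛ₃), Matrix.mul_one]
      _ = W.toCols₁ * Λ₃ := by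
          rw [← hW₁, ← Matrix.mul_assoc, ← transpose_mul,
            nonsing_inv_mul _ ((isUnit_iff_isUnit_det Λ₁).mp hΛ₁), transpose_one, Matrix.one_mul]
  have hW₁0 : W.toCols₁ = 0 := by
    refine eq_zero_of_mul_eq_mul_of_disjoint_spectrum_map f ?_ hsyl
    rwa [transpose_map, spectrum_transpose]
  have hW₂0 : W.toCols₂ = 0 :=
    eq_zero_of_isUnit_of_mul_eq_zero
      ((isUnit_transpose _).mpr (isUnit_nonsing_inv_iff.mpr hΛ₁)) hW₂
  rw [← fromCols_toCols W, hW₁0, hW₂0, fromCols_zero]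

end Field

end Matrix

theorem eigenvalue_embedding_no_spillover_general (nu nφ p : ℕ)
    (Mu : Matrix (Fin nu) (Fin nu) ℝ) (hMuSymm : Muᵀ = Mu) (hMuUnit : IsUnit Mu)
    (M : Matrix (Fin nu ⊕ Fin nφ) (Fin nu ⊕ Fin nφ) ℝ)
    (hM : M = fromBlocks Mu 0 0 0)
    (K : Matrix (Fin nu ⊕ Fin nφ) (Fin nu ⊕ Fin nφ) ℝ)
    (hKSymm : Kᵀ = K) (hKUnit : IsUnit K)
    (X₁ : Matrix (Fin nu ⊕ Fin nφ) (Fin p) ℝ)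
    (X₂ : Matrix (Fin nu ⊕ Fin nφ) (Fin (nu - p) ⊕ Fin nφ) ℝ)
    (X1u : Matrix (Fin nu) (Fin p) ℝ) (X1φ : Matrix (Fin nφ) (Fin p) ℝ)
    (hX₁ : X₁ = fromRows X1u X1φ)
    (Λ₁ : Matrix (Fin p) (Fin p) ℝ) (hΛ₁Unit : IsUnit Λ₁)
    (Λ₃ : Matrix (Fin (nu - p)) (Fin (nu - p)) ℝ) (hΛ₃Unit : IsUnit Λ₃)
    (hdisj : ¬ ∃ μ : ℂ,
      (Λ₁.map (Complex.ofReal) - μ • 1).det = 0 ∧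
      (Λ₃.map (Complex.ofReal) - μ • 1).det = 0)
    (heig : M * fromCols X₁ X₂ +
      K * fromCols X₁ X₂ *
        fromBlocks Λ₁⁻¹ 0 0
          (fromBlocks Λ₃⁻¹ 0 0 (0 : Matrix (Fin nφ) (Fin nφ) ℝ)) = 0)
    (Γ₁ : Matrix (Fin p) (Fin p) ℝ)
    (Λt₁ : Matrix (Fin p) (Fin p) ℝ)
    (Θ : Matrix (Fin p) (Fin p) ℝ)
    (Γt₁ : Matrix (Fin p) (Fin p) ℝ)
    (hMwell : IsUnit (Mu⁻¹ - X1u * Γ₁⁻¹ * X1uᵀ + X1u * Θ * Γt₁⁻¹ * Θᵀ * X1uᵀ))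
    (hKwell : IsUnit (K⁻¹ + X₁ * Λ₁ * Γ₁⁻¹ * X₁ᵀ -
      X₁ * Θ * Λt₁ * Γt₁⁻¹ * Θᵀ * X₁ᵀ)) :
    let Mtu := (Mu⁻¹ - X1u * Γ₁⁻¹ * X1uᵀ + X1u * Θ * Γt₁⁻¹ * Θᵀ * X1uᵀ)⁻¹
    let Kt := (K⁻¹ + X₁ * Λ₁ * Γ₁⁻¹ * X₁ᵀ -
      X₁ * Θ * Λt₁ * Γt₁⁻¹ * Θᵀ * X₁ᵀ)⁻¹
    let Mt := fromBlocks Mtu 0 0 (0 : Matrix (Fin nφ) (Fin nφ) ℝ)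
    Mt * X₂ + Kt * X₂ *
      fromBlocks Λ₃⁻¹ 0 0 (0 : Matrix (Fin nφ) (Fin nφ) ℝ) = 0 := by
  intro Mtu Kt Mt
  obtain ⟨h₁, h₂⟩ := mul_fromCols_add_mul_fromCols_mul_fromBlocks_eq_zero_iff.mp heig
  have hMSymm : M.IsSymm := hM ▸ IsSymm.fromBlocks hMuSymm transpose_zero isSymm_zero
  have hdisjℂ : Disjoint (spectrum ℂ (Λ₁.map Complex.ofReal))
      (spectrum ℂ (Λ₃.map Complex.ofReal)) := by
    simpa [Set.disjoint_left, mem_spectrum_iff_det_sub_smul_one_eq_zero] using hdisj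
  have hKX : X₁ᵀ * K * X₂ = 0 :=
    eq_zero_of_inv_transpose_mul_eq_mul_fromBlocks_inv_zero Complex.ofRealHom hΛ₁Unit hΛ₃Unit
      hdisjℂ (transpose_mul_mul_eq_mul_of_isSymm hMSymm hKSymm h₁ h₂)
  have hMX : X₁ᵀ * (M * X₂) = 0 := by
    simpa [Matrix.mul_add, ← Matrix.mul_assoc, hKX] using congrArg (X₁ᵀ * ·) h₂
  have hMXu : X1uᵀ * (Mu * X₂.toRows₁) = 0 := by
    simpa [hM, hX₁, fromBlocks_zero_mul, transpose_fromRows, fromCols_mul_fromRows] using hMX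
  have hKt : Kt * X₂ = K * X₂ := by
    have hK : K⁻¹ + X₁ * Λ₁ * Γ₁⁻¹ * X₁ᵀ - X₁ * Θ * Λt₁ * Γt₁⁻¹ * Θᵀ * X₁ᵀ =
        K⁻¹ + X₁ * (Λ₁ * Γ₁⁻¹ - Θ * Λt₁ * Γt₁⁻¹ * Θᵀ) * X₁ᵀ := by
      simp only [Matrix.mul_sub, Matrix.sub_mul, Matrix.mul_assoc]; abel
    simp only [Kt, hK] at hKwell ⊢
    exact inv_add_mul_mul_transpose_inv_mul_of_transpose_mul_eq_zero hKUnit hKwell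
      (by rw [← Matrix.mul_assoc, hKX])
  have hMtu : Mtu * X₂.toRows₁ = Mu * X₂.toRows₁ := by
    have hMu : Mu⁻¹ - X1u * Γ₁⁻¹ * X1uᵀ + X1u * Θ * Γt₁⁻¹ * Θᵀ * X1uᵀ =
        Mu⁻¹ + X1u * (Θ * Γt₁⁻¹ * Θᵀ - Γ₁⁻¹) * X1uᵀ := by
      simp only [Matrix.mul_sub, Matrix.sub_mul, Matrix.mul_assoc]; abel
    simp only [Mtu, hMu] at hMwell ⊢
    exact inv_add_mul_mul_transpose_inv_mul_of_transpose_mul_eq_zero hMuUnit hMwell hMXu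
  have hMt : Mt * X₂ = M * X₂ := by rw [hM, fromBlocks_zero_mul, fromBlocks_zero_mul, hMtu]
  rw [hMt, hKt]
  exact h₂

/-- no-spillover part of the main eigenvalue embedding theorem:
under the hypotheses of the EEP-PS (original pencil `λM + K` with
`M = diag(Mu,0)`, eigen-equation for `[X₁ X₂]` with eigenvalue blocks
`Λ₁, Λ₃` (and the infinite part), disjoint spectra, `Γ₁ = X₁ᵤᵀ Mu X₁ᵤ`
invertible, new eigenvalue block `Λ̃₁`, parameters `Θ` and `Γ̃₁` with
`Γ̃₁ᵀ = Γ̃₁` and `Γ̃₁ Λ̃₁⁻¹ = Λ̃₁⁻ᵀ Γ̃₁`, and well-definedness of the updates),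
the updated matrices
`M̃ᵤ = (Mu⁻¹ − X₁ᵤΓ₁⁻¹X₁ᵤᵀ + X₁ᵤΘΓ̃₁⁻¹ΘᵀX₁ᵤᵀ)⁻¹` and
`K̃ = (K⁻¹ + X₁Λ₁Γ₁⁻¹X₁ᵀ − X₁ΘΛ̃₁Γ̃₁⁻¹ΘᵀX₁ᵀ)⁻¹`, `M̃ = diag(M̃ᵤ, 0)`, satisfy
`M̃ X₂ + K̃ X₂ diag(Λ₃⁻¹, 0) = 0`: the remaining `n − p` eigenvalues (including
the infinite ones) and eigenvectors `X₂` are preserved unchanged. -/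
theorem eigenvalue_embedding_no_spillover (nu nφ p : ℕ) (hp : p ≤ nu)
    (Mu : Matrix (Fin nu) (Fin nu) ℝ) (hMuSymm : Muᵀ = Mu) (hMuUnit : IsUnit Mu)
    (M : Matrix (Fin nu ⊕ Fin nφ) (Fin nu ⊕ Fin nφ) ℝ)
    (hM : M = fromBlocks Mu 0 0 0)
    (K : Matrix (Fin nu ⊕ Fin nφ) (Fin nu ⊕ Fin nφ) ℝ)
    (hKSymm : Kᵀ = K) (hKUnit : IsUnit K)
    (X₁ : Matrix (Fin nu ⊕ Fin nφ) (Fin p) ℝ)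
    (X₂ : Matrix (Fin nu ⊕ Fin nφ) (Fin (nu - p) ⊕ Fin nφ) ℝ)
    (hXinv : ∃ B : Matrix (Fin p ⊕ (Fin (nu - p) ⊕ Fin nφ)) (Fin nu ⊕ Fin nφ) ℝ,
      fromCols X₁ X₂ * B = 1 ∧ B * fromCols X₁ X₂ = 1)
    (X1u : Matrix (Fin nu) (Fin p) ℝ) (X1φ : Matrix (Fin nφ) (Fin p) ℝ)
    (hX₁ : X₁ = fromRows X1u X1φ)
    (Λ₁ : Matrix (Fin p) (Fin p) ℝ) (hΛ₁Unit : IsUnit Λ₁)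
    (Λ₃ : Matrix (Fin (nu - p)) (Fin (nu - p)) ℝ) (hΛ₃Unit : IsUnit Λ₃)
    (hdisj : ¬ ∃ μ : ℂ,
      (Λ₁.map (Complex.ofReal) - μ • 1).det = 0 ∧
      (Λ₃.map (Complex.ofReal) - μ • 1).det = 0)
    (heig : M * fromCols X₁ X₂ +
      K * fromCols X₁ X₂ *
        fromBlocks Λ₁⁻¹ 0 0
          (fromBlocks Λ₃⁻¹ 0 0 (0 : Matrix (Fin nφ) (Fin nφ) ℝ)) = 0)
    (Γ₁ : Matrix (Fin p) (Fin p) ℝ) (hΓ₁ : Γ₁ = X1uᵀ * Mu * X1u)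
    (hΓ₁Unit : IsUnit Γ₁)
    (Λt₁ : Matrix (Fin p) (Fin p) ℝ) (hΛt₁Unit : IsUnit Λt₁)
    (Θ : Matrix (Fin p) (Fin p) ℝ) (hΘUnit : IsUnit Θ)
    (Γt₁ : Matrix (Fin p) (Fin p) ℝ) (hΓt₁Symm : Γt₁ᵀ = Γt₁)
    (hΓt₁Unit : IsUnit Γt₁)
    (hΓt₁comm : Γt₁ * Λt₁⁻¹ = (Λt₁⁻¹)ᵀ * Γt₁)
    (hMwell : IsUnit (Mu⁻¹ - X1u * Γ₁⁻¹ * X1uᵀ + X1u * Θ * Γt₁⁻¹ * Θᵀ * X1uᵀ))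
    (hKwell : IsUnit (K⁻¹ + X₁ * Λ₁ * Γ₁⁻¹ * X₁ᵀ -
      X₁ * Θ * Λt₁ * Γt₁⁻¹ * Θᵀ * X₁ᵀ)) :
    let Mtu := (Mu⁻¹ - X1u * Γ₁⁻¹ * X1uᵀ + X1u * Θ * Γt₁⁻¹ * Θᵀ * X1uᵀ)⁻¹
    let Kt := (K⁻¹ + X₁ * Λ₁ * Γ₁⁻¹ * X₁ᵀ -
      X₁ * Θ * Λt₁ * Γt₁⁻¹ * Θᵀ * X₁ᵀ)⁻¹
    let Mt := fromBlocks Mtu 0 0 (0 : Matrix (Fin nφ) (Fin nφ) ℝ)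
    Mt * X₂ + Kt * X₂ *
      fromBlocks Λ₃⁻¹ 0 0 (0 : Matrix (Fin nφ) (Fin nφ) ℝ) = 0 :=
  eigenvalue_embedding_no_spillover_general nu nφ p Mu hMuSymm hMuUnit M hM K hKSymm hKUnit X₁ X₂
    X1u X1φ hX₁ Λ₁ hΛ₁Unit Λ₃ hΛ₃Unit hdisj heig Γ₁ Λt₁ Θ Γt₁ hMwell hKwell
end

section
/- (Generalized orthogonality of the eigendata.) Under the stated hypotheses, one has X₁ᵀ M X₂ = 0 and X₁ᵀ K X₂ = 0; moreover Γ₁ := X₁ᵀ M X₁ = X_{1u}ᵀ M_u X_{1u} is symmetric and invertible, X₁ᵀ K X₁ = −Γ₁Λ₁, and Λ₁ᵀΓ₁ = Γ₁Λ₁. -/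
/-!
Split the columns of `[X₁ X₂]` into the finite eigenblocks `(X₁, Λ₁)`, `(X₃, Λ₃)` and
the infinite block `X₄` (with `M X₄ = 0`). For two finite eigenblocks of a symmetric
pencil, symmetry turns the eigen-equations into the Sylvester equation
`Λ₁ᵀ (X₁ᵀ M X₃) = (X₁ᵀ M X₃) Λ₃`, whose only solution is zero when the characteristic
polynomials are coprime (evaluate a Bézout identity at `Λ₁ᵀ`). This gives both
orthogonalities. Then `[X₁ X₂]ᵀ K [X₁ X₂]` is invertible and block diagonal with
upper-left block `-Γ₁ Λ₁`, so `Γ₁` is invertible.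
-/

open Matrix Polynomial

namespace Matrix

variable {R : Type*} [CommRing R] {k l m n : Type*}

section Sylvester

variable [Fintype m] [DecidableEq m] [Fintype n] [DecidableEq n]

theorem aeval_mul_eq_mul_aeval {A : Matrix m m R} {B : Matrix n n R} {X : Matrix m n R}
    (h : A * X = X * B) (q : R[X]) : aeval A q * X = X * aeval B q := by
  have hpow : ∀ k : ℕ, A ^ k * X = X * B ^ k := fun k => by
    induction k with
    | zero => simp
    | succ k ih =>
      rw [pow_succ, pow_succ, Matrix.mul_assoc, h, ← Matrix.mul_assoc, ih, Matrix.mul_assoc]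
  induction q using Polynomial.induction_on' with
  | add p q hp hq => rw [map_add, map_add, Matrix.add_mul, Matrix.mul_add, hp, hq]
  | monomial k c =>
    rw [aeval_monomial, aeval_monomial, ← Algebra.smul_def, ← Algebra.smul_def,
      Matrix.smul_mul, Matrix.mul_smul, hpow]

theorem eq_zero_of_mul_eq_mul_of_isCoprime_charpoly {A : Matrix m m R} {B : Matrix n n R}
    {X : Matrix m n R} (hcop : IsCoprime A.charpoly B.charpoly) (h : A * X = X * B) :
    X = 0 := by
  obtain ⟨u, v, huv⟩ := hcop
  have hinv : aeval A v * aeval A B.charpoly = 1 := by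
    simpa [aeval_self_charpoly] using congrArg (aeval A) huv
  calc X = aeval A v * (aeval A B.charpoly * X) := by
        rw [← Matrix.mul_assoc, hinv, Matrix.one_mul]
    _ = 0 := by
        rw [aeval_mul_eq_mul_aeval h, aeval_self_charpoly, Matrix.mul_zero, Matrix.mul_zero]

theorem eval_charpoly_eq_zero_iff {K : Type*} [Field K] (A : Matrix m m K) (μ : K) :
    A.charpoly.eval μ = 0 ↔ (A - μ • 1).det = 0 := by
  rw [eval_charpoly, ← neg_sub, det_neg, smul_one_eq_diagonal]
  simp

theorem isCoprime_charpoly_of_not_exists_det_sub_smul_eq_zero {K : Type*} [Field K]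
    [IsAlgClosed K] (A : Matrix m m K) (B : Matrix n n K)
    (h : ¬ ∃ μ : K, (A - μ • 1).det = 0 ∧ (B - μ • 1).det = 0) :
    IsCoprime A.charpoly B.charpoly := by
  rw [isCoprime_iff_aeval_ne_zero_of_isAlgClosed (k := K) K]
  intro μ
  rw [← not_and_or]
  rintro ⟨hA, hB⟩
  rw [coe_aeval_eq_eval] at hA hB
  exact h ⟨μ, (eval_charpoly_eq_zero_iff A μ).1 hA, (eval_charpoly_eq_zero_iff B μ).1 hB⟩

end Sylvester

theorem transpose_transpose_mul_mul [Fintype n] (X : Matrix n k R) (M : Matrix n n R)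
    (Y : Matrix n l R) : (Xᵀ * M * Y)ᵀ = Yᵀ * Mᵀ * X := by
  rw [transpose_mul, transpose_mul, transpose_transpose, Matrix.mul_assoc]

theorem isUnit_transpose_mul_mul_s14 [Fintype m] [DecidableEq m] [Fintype n] [DecidableEq n]
    {C : Matrix m n R} {B : Matrix n m R} (hCB : C * B = 1) (hBC : B * C = 1) {K : Matrix m m R} (hK : IsUnit K) : IsUnit (Cᵀ * K * C) := by
  rw [isUnit_iff_isUnit_det]
  refine isUnit_det_of_right_inverse (B := B * K⁻¹ * Bᵀ) ?_
  calc Cᵀ * K * C * (B * K⁻¹ * Bᵀ) = Cᵀ * (K * (C * B) * K⁻¹) * Bᵀ := by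
        simp only [Matrix.mul_assoc]
    _ = 1 := by
        rw [hCB, Matrix.mul_one, mul_nonsing_inv K ((isUnit_iff_isUnit_det K).1 hK),
          Matrix.mul_one, ← transpose_mul, hBC, transpose_one]

theorem mul_add_mul_fromBlocks_eq_zero [Fintype l] [Fintype m] [Fintype n]
    {M K : Matrix n n R} {X : Matrix n m R} {Y : Matrix n l R} {A : Matrix m m R} {D : Matrix l l R}
    (h : M * fromCols X Y + K * fromCols X Y * fromBlocks A 0 0 D = 0) :
    M * X + K * X * A = 0 ∧ M * Y + K * Y * D = 0 := by
  rw [mul_fromCols, mul_fromCols, fromCols_mul_fromBlocks] at h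
  constructor <;> ext i j
  · simpa using congrFun₂ h i (Sum.inl j)
  · simpa using congrFun₂ h i (Sum.inr j)

section Eigenblock

variable [Fintype k] [Fintype n]

/-- The eigen-equation of the pencil `λ M + K`, with `Λ` acting on the columns of `X`. -/
def IsEigenblock (M K : Matrix n n R) (X : Matrix n k R) (Λ : Matrix k k R) : Prop :=
  M * X * Λ + K * X = 0

theorem isEigenblock_of_mul_add_mul_inv_eq_zero [DecidableEq k] {M K : Matrix n n R}
    {X : Matrix n k R} {Λ : Matrix k k R} (hΛ : IsUnit Λ) (h : M * X + K * X * Λ⁻¹ = 0) :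
    IsEigenblock M K X Λ := by
  have := congrArg (· * Λ) h
  simpa [IsEigenblock, Matrix.add_mul, Matrix.mul_assoc,
    nonsing_inv_mul Λ ((isUnit_iff_isUnit_det Λ).1 hΛ)] using this

namespace IsEigenblock

variable {M K : Matrix n n R} {X : Matrix n k R} {Λ : Matrix k k R}

theorem mul_eq (h : IsEigenblock M K X Λ) : K * X = -(M * X * Λ) :=
  eq_neg_of_add_eq_zero_right h

theorem transpose_mul_eq (h : IsEigenblock M K X Λ) (hM : Mᵀ = M) (hK : Kᵀ = K) :
    Xᵀ * K = -(Λᵀ * Xᵀ * M) := by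
  rw [← hK, ← transpose_mul, h.mul_eq, transpose_neg, transpose_mul, transpose_mul, hM,
    Matrix.mul_assoc]

theorem transpose_mul_mul_self (h : IsEigenblock M K X Λ) :
    Xᵀ * K * X = -(Xᵀ * M * X * Λ) := by
  rw [Matrix.mul_assoc, h.mul_eq, Matrix.mul_neg]
  simp only [Matrix.mul_assoc]

theorem transpose_mul_comm (h : IsEigenblock M K X Λ) (hM : Mᵀ = M) (hK : Kᵀ = K) :
    Λᵀ * (Xᵀ * M * X) = Xᵀ * M * X * Λ := by
  have := h.transpose_mul_mul_self
  rw [h.transpose_mul_eq hM hK, Matrix.neg_mul] at this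
  simpa only [Matrix.mul_assoc, neg_inj] using this

theorem transpose_mul_mul_eq_zero_of_isCoprime [Fintype l] [DecidableEq k] [DecidableEq l]
    {Y : Matrix n l R} {Λ' : Matrix l l R}
    (hX : IsEigenblock M K X Λ) (hY : IsEigenblock M K Y Λ') (hM : Mᵀ = M) (hK : Kᵀ = K)
    (hcop : IsCoprime Λ.charpoly Λ'.charpoly) :
    Xᵀ * M * Y = 0 ∧ Xᵀ * K * Y = 0 := by
  have hsylv : Λᵀ * (Xᵀ * M * Y) = Xᵀ * M * Y * Λ' := by
    have hKY : Xᵀ * K * Y = Xᵀ * (K * Y) := Matrix.mul_assoc _ _ _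
    rw [hX.transpose_mul_eq hM hK, hY.mul_eq, Matrix.neg_mul] at hKY
    simpa only [Matrix.mul_neg, Matrix.mul_assoc, neg_inj] using hKY
  have hMY : Xᵀ * M * Y = 0 :=
    eq_zero_of_mul_eq_mul_of_isCoprime_charpoly (by rwa [charpoly_transpose]) hsylv
  refine ⟨hMY, ?_⟩
  rw [Matrix.mul_assoc, hY.mul_eq, Matrix.mul_neg, ← Matrix.mul_assoc, ← Matrix.mul_assoc, hMY,
    Matrix.zero_mul, neg_zero]

theorem transpose_mul_mul_eq_zero_of_mul_eq_zero {Y : Matrix n l R}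
    (hX : IsEigenblock M K X Λ) (hY : M * Y = 0) (hM : Mᵀ = M) (hK : Kᵀ = K) :
    Xᵀ * M * Y = 0 ∧ Xᵀ * K * Y = 0 := by
  refine ⟨by rw [Matrix.mul_assoc, hY, Matrix.mul_zero], ?_⟩
  rw [hX.transpose_mul_eq hM hK, Matrix.neg_mul, Matrix.mul_assoc, hY, Matrix.mul_zero,
    neg_zero]

end IsEigenblock

end Eigenblock

end Matrix

theorem eigendata_generalized_orthogonality_general (nu nφ p : ℕ)
    (Mu : Matrix (Fin nu) (Fin nu) ℝ) (hMuSymm : Muᵀ = Mu)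
    (M : Matrix (Fin nu ⊕ Fin nφ) (Fin nu ⊕ Fin nφ) ℝ)
    (hM : M = fromBlocks Mu 0 0 0)
    (K : Matrix (Fin nu ⊕ Fin nφ) (Fin nu ⊕ Fin nφ) ℝ)
    (hKSymm : Kᵀ = K) (hKUnit : IsUnit K)
    (X₁ : Matrix (Fin nu ⊕ Fin nφ) (Fin p) ℝ)
    (X₂ : Matrix (Fin nu ⊕ Fin nφ) (Fin (nu - p) ⊕ Fin nφ) ℝ)
    (hXinv : ∃ B : Matrix (Fin p ⊕ (Fin (nu - p) ⊕ Fin nφ)) (Fin nu ⊕ Fin nφ) ℝ,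
      fromCols X₁ X₂ * B = 1 ∧ B * fromCols X₁ X₂ = 1)
    (X1u : Matrix (Fin nu) (Fin p) ℝ) (X1φ : Matrix (Fin nφ) (Fin p) ℝ)
    (hX₁ : X₁ = fromRows X1u X1φ)
    (Λ₁ : Matrix (Fin p) (Fin p) ℝ) (hΛ₁Unit : IsUnit Λ₁)
    (Λ₃ : Matrix (Fin (nu - p)) (Fin (nu - p)) ℝ) (hΛ₃Unit : IsUnit Λ₃)
    (hdisj : ¬ ∃ μ : ℂ,
      (Λ₁.map (Complex.ofReal) - μ • 1).det = 0 ∧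
      (Λ₃.map (Complex.ofReal) - μ • 1).det = 0)
    (heig : M * fromCols X₁ X₂ +
      K * fromCols X₁ X₂ *
        fromBlocks Λ₁⁻¹ 0 0
          (fromBlocks Λ₃⁻¹ 0 0 (0 : Matrix (Fin nφ) (Fin nφ) ℝ)) = 0)
    (Γ₁ : Matrix (Fin p) (Fin p) ℝ) (hΓ₁ : Γ₁ = X1uᵀ * Mu * X1u) :
    X₁ᵀ * M * X₂ = 0 ∧ X₁ᵀ * K * X₂ = 0 ∧
    X₁ᵀ * M * X₁ = Γ₁ ∧ Γ₁ᵀ = Γ₁ ∧ IsUnit Γ₁ ∧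
    X₁ᵀ * K * X₁ = -(Γ₁ * Λ₁) ∧ Λ₁ᵀ * Γ₁ = Γ₁ * Λ₁ := by
  have hMSymm : Mᵀ = M := by simp [hM, fromBlocks_transpose, hMuSymm]
  obtain ⟨heig₁, heig₂⟩ := mul_add_mul_fromBlocks_eq_zero heig
  rw [← fromCols_toCols X₂] at heig₂
  obtain ⟨heig₃, heig₄⟩ := mul_add_mul_fromBlocks_eq_zero heig₂
  have hX₁eig := isEigenblock_of_mul_add_mul_inv_eq_zero hΛ₁Unit heig₁
  have hcop : IsCoprime Λ₁.charpoly Λ₃.charpoly := by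
    rw [← isCoprime_map Complex.ofRealHom, ← charpoly_map, ← charpoly_map]
    exact isCoprime_charpoly_of_not_exists_det_sub_smul_eq_zero _ _ hdisj
  obtain ⟨hM₃, hK₃⟩ := hX₁eig.transpose_mul_mul_eq_zero_of_isCoprime
    (isEigenblock_of_mul_add_mul_inv_eq_zero hΛ₃Unit heig₃) hMSymm hKSymm hcop
  obtain ⟨hM₄, hK₄⟩ := hX₁eig.transpose_mul_mul_eq_zero_of_mul_eq_zero
    (by simpa using heig₄) hMSymm hKSymm
  have hMorth : X₁ᵀ * M * X₂ = 0 := by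
    rw [← fromCols_toCols X₂, mul_fromCols, hM₃, hM₄, fromCols_zero]
  have hKorth : X₁ᵀ * K * X₂ = 0 := by
    rw [← fromCols_toCols X₂, mul_fromCols, hK₃, hK₄, fromCols_zero]
  have hΓ : X₁ᵀ * M * X₁ = Γ₁ := by
    simp [hX₁, transpose_fromRows, hM, fromCols_mul_fromBlocks, fromCols_mul_fromRows, hΓ₁]
  have hKΓ : X₁ᵀ * K * X₁ = -(Γ₁ * Λ₁) := hΓ ▸ hX₁eig.transpose_mul_mul_self
  refine ⟨hMorth, hKorth, hΓ, ?_, ?_, hKΓ, hΓ ▸ hX₁eig.transpose_mul_comm hMSymm hKSymm⟩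
  · rw [← hΓ, transpose_transpose_mul_mul, hMSymm]
  · obtain ⟨B, hCB, hBC⟩ := hXinv
    have hcong := isUnit_transpose_mul_mul_s14 hCB hBC hKUnit
    have hK₂₁ : X₂ᵀ * K * X₁ = 0 := by
      rw [← hKSymm, ← transpose_transpose_mul_mul, hKorth, transpose_zero]
    rw [transpose_fromCols, fromRows_mul, fromRows_mul_fromCols, hK₂₁, hKΓ,
      isUnit_fromBlocks_zero₂₁, IsUnit.neg_iff] at hcong
    exact isUnit_of_mul_isUnit_left hcong.1

/-- generalized orthogonality of the eigendata: for the pencil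
`λM + K` with `M = diag(Mu,0)`, `Mu`, `K` symmetric invertible, `[X₁ X₂]`
invertible satisfying the eigen-equation with eigenvalue blocks `Λ₁, Λ₃` (and
the infinite part) whose complex spectra are disjoint, one has
`X₁ᵀ M X₂ = 0`, `X₁ᵀ K X₂ = 0`; moreover `Γ₁ := X₁ᵀ M X₁ = X₁ᵤᵀ Mu X₁ᵤ` is
symmetric and invertible, `X₁ᵀ K X₁ = −Γ₁ Λ₁`, and `Λ₁ᵀ Γ₁ = Γ₁ Λ₁`. -/
theorem eigendata_generalized_orthogonality (nu nφ p : ℕ) (hp : p ≤ nu)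
    (Mu : Matrix (Fin nu) (Fin nu) ℝ) (hMuSymm : Muᵀ = Mu) (hMuUnit : IsUnit Mu)
    (M : Matrix (Fin nu ⊕ Fin nφ) (Fin nu ⊕ Fin nφ) ℝ)
    (hM : M = fromBlocks Mu 0 0 0)
    (K : Matrix (Fin nu ⊕ Fin nφ) (Fin nu ⊕ Fin nφ) ℝ)
    (hKSymm : Kᵀ = K) (hKUnit : IsUnit K)
    (X₁ : Matrix (Fin nu ⊕ Fin nφ) (Fin p) ℝ)
    (X₂ : Matrix (Fin nu ⊕ Fin nφ) (Fin (nu - p) ⊕ Fin nφ) ℝ)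
    (hXinv : ∃ B : Matrix (Fin p ⊕ (Fin (nu - p) ⊕ Fin nφ)) (Fin nu ⊕ Fin nφ) ℝ,
      fromCols X₁ X₂ * B = 1 ∧ B * fromCols X₁ X₂ = 1)
    (X1u : Matrix (Fin nu) (Fin p) ℝ) (X1φ : Matrix (Fin nφ) (Fin p) ℝ)
    (hX₁ : X₁ = fromRows X1u X1φ)
    (Λ₁ : Matrix (Fin p) (Fin p) ℝ) (hΛ₁Unit : IsUnit Λ₁)
    (Λ₃ : Matrix (Fin (nu - p)) (Fin (nu - p)) ℝ) (hΛ₃Unit : IsUnit Λ₃)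
    (hdisj : ¬ ∃ μ : ℂ,
      (Λ₁.map (Complex.ofReal) - μ • 1).det = 0 ∧
      (Λ₃.map (Complex.ofReal) - μ • 1).det = 0)
    (heig : M * fromCols X₁ X₂ +
      K * fromCols X₁ X₂ *
        fromBlocks Λ₁⁻¹ 0 0
          (fromBlocks Λ₃⁻¹ 0 0 (0 : Matrix (Fin nφ) (Fin nφ) ℝ)) = 0)
    (Γ₁ : Matrix (Fin p) (Fin p) ℝ) (hΓ₁ : Γ₁ = X1uᵀ * Mu * X1u) :
    X₁ᵀ * M * X₂ = 0 ∧ X₁ᵀ * K * X₂ = 0 ∧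
    X₁ᵀ * M * X₁ = Γ₁ ∧ Γ₁ᵀ = Γ₁ ∧ IsUnit Γ₁ ∧
    X₁ᵀ * K * X₁ = -(Γ₁ * Λ₁) ∧ Λ₁ᵀ * Γ₁ = Γ₁ * Λ₁ :=
  eigendata_generalized_orthogonality_general nu nφ p Mu hMuSymm M hM K hKSymm hKUnit X₁ X₂ hXinv
    X1u X1φ hX₁ Λ₁ hΛ₁Unit Λ₃ hΛ₃Unit hdisj heig Γ₁ hΓ₁
end
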